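/- For any x ∈ R^d, the tropical distance from x to the tropical hyperplane H_0 defined by the zero normal vector equals max(x) - secondmax(x), where secondmax(x) is the second largest coordinate value of x (with multiplicity, i.e., the maximum over j ≠ argmax of x_j). -/

import Mathlib

noncomputable def dtr {d : ℕ} (v w : Fin d → ℝ) : ℝ :=
  (⨆ i, (v i - w i)) - ⨅ i, (v i - w i)

/-- The tropical hyperplane with normal vector `ω`: the max of `ω i + x i` is attained twice. -/
def Hyp {d : ℕ} (ω : Fin d → ℝ) : Set (Fin d → ℝ) :=
  {x | ∃ i j : Fin d, i ≠ j ∧ ω i + x i = ω j + x j ∧ ∀ k, ω k + x k ≤ ω i + x i}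

/-- Tropical distance from a point to the tropical hyperplane `H_ω`. -/
noncomputable def distH {d : ℕ} (x ω : Fin d → ℝ) : ℝ :=
  sInf (dtr x '' Hyp ω)

/-- The second largest entry (with multiplicity) of a vector. -/
noncomputable def smax {d : ℕ} (x : Fin d → ℝ) : ℝ :=
  sSup {r | ∃ i j : Fin d, i ≠ j ∧ r = min (x i) (x j)}

/-- Open sector `S_ω^i` of the tropical hyperplane `H_ω`. -/
def Sector {d : ℕ} (ω : Fin d → ℝ) (i : Fin d) : Set (Fin d → ℝ) :=
  {x | ∀ j, j ≠ i → ω j + x j < ω i + x i}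

/-! If `x` is largest at `i` and `j ≠ i` carries the largest remaining entry, then lowering `x i`
to `x j` lands in `H_0` at distance `x i - x j`. Conversely, every `z ∈ H_0` attains its maximum
at some `a ≠ i`; comparing the coordinates `i` and `a` of `x - z` gives
`d_tr(x, z) ≥ (x i - z i) - (x a - z a) ≥ x i - x j`. -/

section
variable {d : ℕ}

lemma sub_sub_sub_le_dtr (v w : Fin d → ℝ) (i j : Fin d) :
    (v i - w i) - (v j - w j) ≤ dtr v w :=
  sub_le_sub (le_ciSup (f := fun k => v k - w k) (Set.finite_range _).bddAbove i)
    (ciInf_le (f := fun k => v k - w k) (Set.finite_range _).bddBelow j)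

lemma dtr_le_of_forall_sub_sub_sub_le [Nonempty (Fin d)] {v w : Fin d → ℝ} {c : ℝ}
    (h : ∀ i j, (v i - w i) - (v j - w j) ≤ c) : dtr v w ≤ c := by
  have hsup : (⨆ i, v i - w i) ≤ c + ⨅ j, v j - w j :=
    ciSup_le fun i => le_add_of_sub_left_le (le_ciInf fun j => by linarith [h i j])
  rw [dtr]
  linarith

lemma exists_ne_forall_le_of_mem_Hyp {ω z : Fin d → ℝ} (hz : z ∈ Hyp ω) (i : Fin d) :
    ∃ a, a ≠ i ∧ ∀ k, ω k + z k ≤ ω a + z a := by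
  obtain ⟨a, b, hab, hEq, hmax⟩ := hz
  by_cases hai : a = i
  · subst hai
    exact ⟨b, hab.symm, hEq ▸ hmax⟩
  · exact ⟨a, hai, hmax⟩

lemma sub_le_dtr_of_mem_Hyp_zero {x z : Fin d → ℝ} {i j : Fin d}
    (hj : ∀ k, k ≠ i → x k ≤ x j) (hz : z ∈ Hyp 0) : x i - x j ≤ dtr x z := by
  obtain ⟨a, hai, hza⟩ := exists_ne_forall_le_of_mem_Hyp hz i
  have hzi : z i ≤ z a := by simpa using hza i
  linarith [sub_sub_sub_le_dtr x z i a, hj a hai]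

lemma update_mem_Hyp_zero {x : Fin d → ℝ} {i j : Fin d} (hij : i ≠ j)
    (hj : ∀ k, k ≠ i → x k ≤ x j) : Function.update x i (x j) ∈ Hyp 0 := by
  refine ⟨i, j, hij, by simp [hij.symm], fun k => ?_⟩
  by_cases hki : k = i
  · simp [hki]
  · simpa [hki] using hj k hki

lemma dtr_update_le {x : Fin d → ℝ} {i j : Fin d} (hji : x j ≤ x i) :
    dtr x (Function.update x i (x j)) ≤ x i - x j := by
  have : Nonempty (Fin d) := ⟨i⟩
  refine dtr_le_of_forall_sub_sub_sub_le fun k l => ?_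
  by_cases hk : k = i <;> by_cases hl : l = i <;> simp [hk, hl] <;> linarith

lemma smax_eq {x : Fin d → ℝ} {i j : Fin d} (hij : i ≠ j) (hi : ∀ k, x k ≤ x i)
    (hj : ∀ k, k ≠ i → x k ≤ x j) : smax x = x j := by
  refine IsGreatest.csSup_eq ⟨⟨i, j, hij, (min_eq_right (hi j)).symm⟩, ?_⟩
  rintro _ ⟨k, l, hkl, rfl⟩
  by_cases hki : k = i
  · subst hki
    exact (min_le_right _ _).trans (hj l hkl.symm)
  · exact (min_le_left _ _).trans (hj k hki)

end

lemma exists_max_and_max_ne {ι : Type*} [Finite ι] [Nontrivial ι] (x : ι → ℝ) :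
    ∃ i j, i ≠ j ∧ (∀ k, x k ≤ x i) ∧ ∀ k, k ≠ i → x k ≤ x j := by
  obtain ⟨i, hi⟩ := Finite.exists_max x
  have : Nonempty {k // k ≠ i} := nonempty_subtype.mpr (exists_ne i)
  obtain ⟨⟨j, hji⟩, hj⟩ := Finite.exists_max fun k : {k // k ≠ i} => x k
  exact ⟨i, j, hji.symm, hi, fun k hki => hj ⟨k, hki⟩⟩

/-- Distance from a point to the tropical hyperplane `H_0` equals max minus second max. -/
theorem distH_zero {d : ℕ} (hd : 2 ≤ d) (x : Fin d → ℝ) :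
    distH x 0 = (⨆ i, x i) - smax x := by
  have : Nontrivial (Fin d) := Fin.nontrivial_iff_two_le.mpr hd
  obtain ⟨i, j, hij, hi, hj⟩ := exists_max_and_max_ne x
  have hsup : (⨆ k, x k) = x i :=
    le_antisymm (ciSup_le hi) (le_ciSup (Set.finite_range x).bddAbove i)
  have hlower : x i - x j ∈ lowerBounds (dtr x '' Hyp 0) := by
    rintro _ ⟨z, hz, rfl⟩
    exact sub_le_dtr_of_mem_Hyp_zero hj hz
  have hwitness := Set.mem_image_of_mem (dtr x) (update_mem_Hyp_zero hij hj)
  rw [hsup, smax_eq hij hi hj, distH]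
  exact le_antisymm (csInf_le_of_le ⟨_, hlower⟩ hwitness (dtr_update_le (hi j)))
    (le_csInf ⟨_, hwitness⟩ hlower)
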